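/- Let d ≥ 1 be a natural number, let a = 15 and m = 5, and define Yang's standing-wave test function f : ℝᵈ → ℝ by f(x) = (exp(-∑_{i=1}^d (x_i/a)^(2m)) − 2·exp(-∑_{i=1}^d x_i²)) · ∏_{i=1}^d cos²(x_i). Then f(0, …, 0) = −1, and for every x in the hypercube [−20, 20]ᵈ with x ≠ 0 one has f(x) > −1; hence f attains its unique global minimum value −1 on [−20, 20]ᵈ at the origin. -/
import Mathlib


/-- Yang's standing-wave test function in `d` dimensions with `a = 15` and `m = 5`:
`f x = (exp (-∑ (xᵢ/15)^10) - 2 exp (-∑ xᵢ²)) * ∏ cos² xᵢ`. -/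
noncomputable def yangFunction (d : ℕ) (x : Fin d → ℝ) : ℝ :=
  (Real.exp (-(∑ i, (x i / 15) ^ 10)) - 2 * Real.exp (-(∑ i, (x i) ^ 2))) *
    ∏ i, Real.cos (x i) ^ 2

/-- Yang's function (with `a = 15`, `m = 5`) satisfies `f 0 = -1`, and `f x > -1` for
every `x ≠ 0` in the hypercube `[-20, 20]ᵈ`; hence its unique global minimum on the
hypercube is `-1`, attained at the origin. -/
theorem yangFunction_unique_global_minimum (d : ℕ) (hd : 1 ≤ d) :
    yangFunction d 0 = -1 ∧
    ∀ x : Fin d → ℝ, (∀ i, x i ∈ Set.Icc (-20 : ℝ) 20) → x ≠ 0 →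
      yangFunction d x > -1 := by
  constructor
  · simp [yangFunction]; norm_num
  · intro x hx hx0
    obtain ⟨j, hj⟩ : ∃ j, x j ≠ 0 := by
      by_contra h; push_neg at h; exact hx0 (funext h)
    unfold yangFunction
    set S1 := ∑ i, (x i / 15) ^ 10 with hS1def
    set S2 := ∑ i, (x i) ^ 2 with hS2def
    set P := ∏ i, Real.cos (x i) ^ 2 with hPdef
    have hP0 : 0 ≤ P := Finset.prod_nonneg fun i _ => sq_nonneg _
    have hP1 : P ≤ 1 := Finset.prod_le_one (fun i _ => sq_nonneg _)
      (fun i _ => by nlinarith [Real.neg_one_le_cos (x i), Real.cos_le_one (x i)])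
    have hS12 : S1 ≤ S2 := by
      apply Finset.sum_le_sum
      intro i _
      have h1 := (hx i).1
      have h2 := (hx i).2
      have hx2 : (x i) ^ 2 ≤ 400 := by nlinarith
      have hx8 : (x i) ^ 8 ≤ 400 ^ 4 := by
        calc (x i) ^ 8 = ((x i) ^ 2) ^ 4 := by ring
        _ ≤ 400 ^ 4 := pow_le_pow_left₀ (sq_nonneg _) hx2 4
      have : (x i / 15) ^ 10 = (x i) ^ 10 / 15 ^ 10 := by ring
      rw [this]
      rw [div_le_iff₀ (by norm_num : (0:ℝ) < 15 ^ 10)]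
      nlinarith [sq_nonneg (x i), mul_nonneg (sq_nonneg (x i)) (sq_nonneg (x i))]
    have hS2pos : 0 < S2 :=
      Finset.sum_pos' (fun i _ => sq_nonneg _)
        ⟨j, Finset.mem_univ j, pow_two_pos_of_ne_zero hj⟩
    have hE2lt1 : Real.exp (-S2) < 1 := by
      rw [Real.exp_lt_one_iff]; linarith
    have hE2pos : 0 < Real.exp (-S2) := Real.exp_pos _
    have hE12 : Real.exp (-S2) ≤ Real.exp (-S1) := Real.exp_le_exp.mpr (by linarith)
    have hc : -1 < Real.exp (-S1) - 2 * Real.exp (-S2) := by linarith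
    rcases hP1.lt_or_eq with h | h
    · nlinarith [mul_nonneg (by linarith : (0:ℝ) ≤ Real.exp (-S1) - 2 * Real.exp (-S2) + 1) hP0]
    · rw [h, mul_one]; exact hc
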